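/- (One-dimensional Gaussian isoperimetric inequality) For any measurable A ⊆ ℝ with standard Gaussian measure γ(A) = Φ(α), and any ε ≥ 0, γ(A_ε) ≥ Φ(α + ε), where A_ε = {x : ∃ a ∈ A, |x - a| ≤ ε}. -/

import Mathlib

open MeasureTheory ProbabilityTheory

noncomputable def stdNormalCDF (t : ℝ) : ℝ :=
  ∫ x in Set.Iic t, Real.exp (-x ^ 2 / 2) / Real.sqrt (2 * Real.pi)

noncomputable def stdNormalCDFInv : ℝ → ℝ := Function.invFun stdNormalCDF

noncomputable def gaussianPi (n : ℕ) (x₀ : EuclideanSpace ℝ (Fin n)) (σ : ℝ) :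
    Measure (EuclideanSpace ℝ (Fin n)) :=
  (Measure.pi fun i => gaussianReal (x₀ i) ⟨σ ^ 2, sq_nonneg σ⟩).map (WithLp.toLp 2)

/-!
Let `U` be the open `ε`-neighbourhood of `A`. Its connected components are disjoint open
intervals `C`, countably many, and `A ∩ C` stays at distance at least `ε` from the ends of `C`.
It suffices to prove `Φ(α + ε) γ(A ∩ C) ≤ Φ(α) γ(C)` for each `C`: summing over the components
and cancelling `γ(A) = Φ(α)` gives `γ(U) ≥ Φ(α + ε)`. If `A ∩ C` has mass at most `Φ(β) ≤ Φ(α)`,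
then `C` has mass at least `Φ(β + ε)`, because among sets of given mass the half-line
`(-∞, β]` gains the least under enlargement by `ε`; for an interval this follows from the
subadditivity of the isoperimetric profile `φ ∘ Φ⁻¹`. Finally `Φ(β + ε) / Φ(β) ≥ Φ(α + ε) / Φ(α)`
by the log-concavity of `Φ`.
-/

open Real Set Filter Topology

noncomputable def stdNormalPDF (x : ℝ) : ℝ := exp (-x ^ 2 / 2) / √(2 * π)

local notation "φ" => stdNormalPDF
local notation "Φ" => stdNormalCDF
local notation "γ" => gaussianReal 0 1

lemma stdNormalPDF_eq_gaussianPDFReal : φ = gaussianPDFReal 0 1 := by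
  ext x
  simp [stdNormalPDF, gaussianPDFReal, div_eq_inv_mul]

lemma stdNormalPDF_pos (x : ℝ) : 0 < φ x := by
  rw [stdNormalPDF_eq_gaussianPDFReal]
  exact gaussianPDFReal_pos _ _ _ one_ne_zero

@[fun_prop]
lemma continuous_stdNormalPDF : Continuous φ := by
  unfold stdNormalPDF
  fun_prop

lemma integrable_stdNormalPDF : Integrable φ := by
  rw [stdNormalPDF_eq_gaussianPDFReal]
  exact integrable_gaussianPDFReal 0 1

lemma stdNormalPDF_neg (x : ℝ) : φ (-x) = φ x := by
  simp [stdNormalPDF]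

lemma hasDerivAt_stdNormalPDF (x : ℝ) : HasDerivAt φ (-x * φ x) x := by
  have h : HasDerivAt (fun x : ℝ => -x ^ 2 / 2) (-(2 * x) / 2) x := by
    simpa using (hasDerivAt_pow 2 x).neg.div_const 2
  exact (h.exp.div_const √(2 * π)).congr_deriv (by rw [stdNormalPDF]; ring)

lemma tendsto_stdNormalPDF_atBot : Tendsto φ atBot (𝓝 0) := by
  have h : Tendsto (fun x : ℝ => -x ^ 2 / 2) atBot atBot :=
    (tendsto_neg_atTop_atBot.comp ((tendsto_pow_atTop two_ne_zero).comp
      tendsto_neg_atBot_atTop)).atBot_div_const two_pos |>.congr fun x => by simp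
  have := (tendsto_exp_atBot.comp h).div_const √(2 * π)
  rwa [zero_div] at this

lemma integrable_mul_stdNormalPDF : Integrable fun x => x * φ x := by
  have h := (integrable_mul_exp_neg_mul_sq (b := 1 / 2) (by norm_num)).div_const √(2 * π)
  refine h.congr (ae_of_all _ fun x => ?_)
  simp only [stdNormalPDF]
  ring_nf

lemma integral_Iic_neg_mul_stdNormalPDF (x : ℝ) : ∫ t in Iic x, -t * φ t = φ x := by
  rw [integral_Iic_of_hasDerivAt_of_tendsto continuous_stdNormalPDF.continuousWithinAt
    (fun t _ => hasDerivAt_stdNormalPDF t) ?_ tendsto_stdNormalPDF_atBot, sub_zero]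
  simpa using integrable_mul_stdNormalPDF.neg.integrableOn

lemma stdNormalCDF_sub (a b : ℝ) : Φ b - Φ a = ∫ x in a..b, φ x :=
  intervalIntegral.integral_Iic_sub_Iic integrable_stdNormalPDF.integrableOn
    integrable_stdNormalPDF.integrableOn

lemma stdNormalCDF_neg (x : ℝ) : Φ (-x) = 1 - Φ x := by
  have hsplit : Φ x + ∫ t in Ioi x, φ t = 1 := by
    rw [stdNormalCDF, ← integral_gaussianPDFReal_eq_one 0 one_ne_zero,
      ← stdNormalPDF_eq_gaussianPDFReal]
    exact intervalIntegral.integral_Iic_add_Ioi integrable_stdNormalPDF.integrableOn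
      integrable_stdNormalPDF.integrableOn
  have hreflect : Φ (-x) = ∫ t in Ioi x, φ t := by
    rw [← neg_neg x, ← integral_comp_neg_Iic, neg_neg]
    simp only [stdNormalPDF_neg]
    rfl
  linarith

lemma hasDerivAt_stdNormalCDF (x : ℝ) : HasDerivAt Φ (φ x) x := by
  have h : Φ = fun u => Φ 0 + ∫ t in (0 : ℝ)..u, φ t := by
    ext u
    rw [← stdNormalCDF_sub]
    ring
  rw [h]
  exact (intervalIntegral.integral_hasDerivAt_right integrable_stdNormalPDF.intervalIntegrable
    (continuous_stdNormalPDF.stronglyMeasurableAtFilter _ _)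
    continuous_stdNormalPDF.continuousAt).const_add _

@[fun_prop]
lemma continuous_stdNormalCDF : Continuous Φ :=
  continuous_iff_continuousAt.2 fun x => (hasDerivAt_stdNormalCDF x).continuousAt

lemma stdNormalCDF_strictMono : StrictMono Φ :=
  strictMono_of_hasDerivAt_pos hasDerivAt_stdNormalCDF stdNormalPDF_pos

lemma stdNormalCDF_nonneg (x : ℝ) : 0 ≤ Φ x :=
  setIntegral_nonneg measurableSet_Iic fun t _ => (stdNormalPDF_pos t).le

lemma stdNormalCDF_pos (x : ℝ) : 0 < Φ x :=
  (stdNormalCDF_nonneg (x - 1)).trans_lt (stdNormalCDF_strictMono (by linarith))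

lemma gaussianReal_apply_eq_integral_stdNormalPDF (s : Set ℝ) :
    γ s = ENNReal.ofReal (∫ x in s, φ x) := by
  rw [gaussianReal_apply_eq_integral 0 one_ne_zero, stdNormalPDF_eq_gaussianPDFReal]

lemma stdNormalCDF_eq_cdf : Φ = cdf γ := by
  ext x
  rw [cdf_eq_real, measureReal_def, gaussianReal_apply_eq_integral_stdNormalPDF]
  exact (ENNReal.toReal_ofReal (stdNormalCDF_nonneg x)).symm

lemma tendsto_stdNormalCDF_atBot : Tendsto Φ atBot (𝓝 0) :=
  stdNormalCDF_eq_cdf ▸ tendsto_cdf_atBot _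

lemma gaussianReal_Icc {a b : ℝ} (h : a ≤ b) : γ (Icc a b) = ENNReal.ofReal (Φ b - Φ a) := by
  rw [gaussianReal_apply_eq_integral_stdNormalPDF, integral_Icc_eq_integral_Ioc,
    ← intervalIntegral.integral_of_le h, stdNormalCDF_sub]

lemma gaussianReal_Ioo {a b : ℝ} (h : a ≤ b) : γ (Ioo a b) = ENNReal.ofReal (Φ b - Φ a) := by
  rw [gaussianReal_apply_eq_integral_stdNormalPDF, ← integral_Ioc_eq_integral_Ioo,
    ← intervalIntegral.integral_of_le h, stdNormalCDF_sub]

lemma neg_mul_stdNormalCDF_le (x : ℝ) : -x * Φ x ≤ φ x := by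
  rw [← integral_Iic_neg_mul_stdNormalPDF, stdNormalCDF, ← integral_const_mul]
  refine setIntegral_mono_on (integrable_stdNormalPDF.const_mul _).integrableOn
    (by simpa using integrable_mul_stdNormalPDF.neg.integrableOn) measurableSet_Iic
    fun t (ht : t ≤ x) => ?_
  exact mul_le_mul_of_nonneg_right (by linarith) (stdNormalPDF_pos t).le

lemma antitone_stdNormalPDF_div_stdNormalCDF : Antitone fun x => φ x / Φ x := by
  refine antitone_of_hasDerivAt_nonpos
    (fun x => (hasDerivAt_stdNormalPDF x).div (hasDerivAt_stdNormalCDF x)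
      (stdNormalCDF_pos x).ne') fun x => ?_
  have hmills : 0 ≤ φ x + x * Φ x := by linarith [neg_mul_stdNormalCDF_le x]
  have hnum : -x * φ x * Φ x - φ x * φ x = -(φ x * (φ x + x * Φ x)) := by ring
  rw [Pi.zero_apply, hnum]
  exact div_nonpos_of_nonpos_of_nonneg
    (neg_nonpos.2 (mul_nonneg (stdNormalPDF_pos x).le hmills)) (sq_nonneg _)

lemma stdNormalCDF_mul_le_mul {s t ε : ℝ} (hst : s ≤ t) (hε : 0 ≤ ε) :
    Φ s * Φ (t + ε) ≤ Φ (s + ε) * Φ t := by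
  have hlog (x : ℝ) : HasDerivAt (fun y => log (Φ y)) (φ x / Φ x) x :=
    (hasDerivAt_stdNormalCDF x).log (stdNormalCDF_pos x).ne'
  have hanti : Antitone fun x => log (Φ (x + ε)) - log (Φ x) :=
    antitone_of_hasDerivAt_nonpos
      (fun x => ((hlog (x + ε)).comp_add_const x ε).sub (hlog x))
      fun x => sub_nonpos.2 (antitone_stdNormalPDF_div_stdNormalCDF (by linarith))
  have h := hanti hst
  have hpos := stdNormalCDF_pos
  rw [← log_le_log_iff (mul_pos (hpos _) (hpos _)) (mul_pos (hpos _) (hpos _)),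
    log_mul (hpos _).ne' (hpos _).ne', log_mul (hpos _).ne' (hpos _).ne']
  linarith

/-- With the isoperimetric profile `I = φ ∘ Φ⁻¹`, this is `I (a + b) < I a + I b`. -/
lemma stdNormalPDF_lt_add_of_stdNormalCDF_eq_add {p q r : ℝ} (h : Φ r = Φ p + Φ q) :
    φ r < φ p + φ q := by
  wlog hqp : q ≤ p generalizing p q
  · rw [add_comm] at h ⊢
    exact this h (le_of_not_ge hqp)
  have hpr : p < r := stdNormalCDF_strictMono.lt_iff_lt.1 (by linarith [stdNormalCDF_pos q])
  have hmono : StrictMonoOn (fun t => -φ t - p * Φ t) (Ici p) := by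
    refine strictMonoOn_of_hasDerivWithinAt_pos (convex_Ici p)
      (by fun_prop) (fun t _ =>
        ((hasDerivAt_stdNormalPDF t).neg.sub
          ((hasDerivAt_stdNormalCDF t).const_mul p)).hasDerivWithinAt) fun t ht => ?_
    rw [interior_Ici] at ht
    nlinarith [stdNormalPDF_pos t, mul_pos (sub_pos.2 ht) (stdNormalPDF_pos t)]
  have hpr' := hmono self_mem_Ici hpr.le hpr
  have hΦr : p * Φ r = p * Φ p + p * Φ q := by rw [h, mul_add]
  linarith [neg_mul_stdNormalCDF_le q, mul_le_mul_of_nonneg_right hqp (stdNormalCDF_pos q).le]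

lemma stdNormalPDF_lt_add_of_add_eq_stdNormalCDF {p q r : ℝ} (h : Φ p + Φ q = Φ r) :
    φ q < φ p + φ r := by
  have h' : Φ (-q) = Φ (-r) + Φ p := by
    rw [stdNormalCDF_neg, stdNormalCDF_neg]
    linarith
  simpa only [stdNormalPDF_neg, add_comm (φ r)] using
    stdNormalPDF_lt_add_of_stdNormalCDF_eq_add h'

lemma stdNormalCDF_sub_add_le_of_add_le {s t β ε : ℝ} (h : Φ s + Φ β ≤ Φ t) (hε : 0 ≤ ε) :
    Φ (s - ε) + Φ (β + ε) ≤ Φ (t + ε) := by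
  have hderiv (c u : ℝ) : HasDerivAt (fun u => Φ (c + u)) (φ (c + u)) u :=
    (hasDerivAt_stdNormalCDF (c + u)).comp_const_add c u
  refine image_le_of_deriv_right_lt_deriv_boundary (a := 0) (b := ε)
    (f := fun u => Φ (s - u) + Φ (β + u)) (f' := fun u => -φ (s - u) + φ (β + u))
    (by fun_prop)
    (fun u _ => (((hasDerivAt_stdNormalCDF (s - u)).comp_const_sub s u).add
      (hderiv β u)).hasDerivWithinAt)
    (by simpa using h) (hderiv t) (fun u _ hu => ?_) ⟨hε, le_rfl⟩
  linarith [stdNormalPDF_lt_add_of_add_eq_stdNormalCDF hu]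

lemma mul_stdNormalCDF_add_le {s t α ε w : ℝ} (hε : 0 ≤ ε) (hw : 0 ≤ w) (hwα : w ≤ Φ α)
    (hwst : w ≤ Φ t - Φ s) : w * Φ (α + ε) ≤ Φ α * (Φ (t + ε) - Φ (s - ε)) := by
  rcases hw.eq_or_lt with rfl | hw
  · have hst : s - ε ≤ t + ε := by
      linarith [stdNormalCDF_strictMono.le_iff_le.1 (sub_nonneg.1 hwst)]
    rw [zero_mul]
    exact mul_nonneg (stdNormalCDF_nonneg α)
      (sub_nonneg.2 (stdNormalCDF_strictMono.monotone hst))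
  obtain ⟨β, hβ⟩ : min (Φ α) (Φ t - Φ s) ∈ range Φ :=
    mem_range_of_exists_le_of_exists_ge continuous_stdNormalCDF
      (tendsto_stdNormalCDF_atBot.eventually_le_const (hw.trans_le (le_min hwα hwst))).exists
      ⟨α, min_le_left _ _⟩
  have hβα : β ≤ α := stdNormalCDF_strictMono.le_iff_le.1 (hβ ▸ min_le_left _ _)
  have hexpand : Φ (s - ε) + Φ (β + ε) ≤ Φ (t + ε) :=
    stdNormalCDF_sub_add_le_of_add_le (by linarith [hβ ▸ min_le_right (Φ α) (Φ t - Φ s)]) hε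
  calc w * Φ (α + ε) ≤ Φ β * Φ (α + ε) :=
        mul_le_mul_of_nonneg_right (hβ ▸ le_min hwα hwst) (stdNormalCDF_nonneg _)
    _ ≤ Φ (β + ε) * Φ α := stdNormalCDF_mul_le_mul hβα hε
    _ ≤ Φ α * (Φ (t + ε) - Φ (s - ε)) := by
        rw [mul_comm]
        exact mul_le_mul_of_nonneg_left (by linarith) (stdNormalCDF_nonneg α)

section OrdConnected

variable {B C : Set ℝ} {α ε : ℝ}

lemma Ioo_sub_csInf_add_csSup_subset (hC : C.OrdConnected) (hε : 0 < ε)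
    (hBC : ∀ b ∈ B, Ioo (b - ε) (b + ε) ⊆ C) (hB : B.Nonempty) :
    Ioo (sInf B - ε) (sSup B + ε) ⊆ C := by
  rintro y ⟨hy₁, hy₂⟩
  obtain ⟨b₁, hb₁, hb₁y⟩ := exists_lt_of_csInf_lt hB (show sInf B < y + ε by linarith)
  obtain ⟨b₂, hb₂, hb₂y⟩ := exists_lt_of_lt_csSup hB (show y - ε < sSup B by linarith)
  have h₁ : min y b₁ ∈ C :=
    hBC b₁ hb₁ ⟨lt_min (by linarith) (by linarith), (min_le_right _ _).trans_lt (by linarith)⟩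
  have h₂ : max y b₂ ∈ C :=
    hBC b₂ hb₂ ⟨(le_max_right _ _).trans_lt' (by linarith), max_lt (by linarith) (by linarith)⟩
  exact hC.out h₁ h₂ ⟨min_le_left _ _, le_max_left _ _⟩

lemma ofReal_mul_gaussianReal_le_of_bddBelow_of_bddAbove (hC : C.OrdConnected) (hε : 0 < ε)
    (hBC : ∀ b ∈ B, Ioo (b - ε) (b + ε) ⊆ C) (hBα : γ B ≤ ENNReal.ofReal (Φ α))
    (hB₁ : BddBelow B) (hB₂ : BddAbove B) :
    ENNReal.ofReal (Φ (α + ε)) * γ B ≤ ENNReal.ofReal (Φ α) * γ C := by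
  rcases B.eq_empty_or_nonempty with rfl | hB
  · simp
  set s := sInf B
  set t := sSup B
  have hst : s ≤ t := csInf_le_csSup hB hB₁ hB₂
  have hBst : γ B ≤ ENNReal.ofReal (Φ t - Φ s) :=
    gaussianReal_Icc hst ▸ measure_mono fun b hb => ⟨csInf_le hB₁ hb, le_csSup hB₂ hb⟩
  have hbound := mul_stdNormalCDF_add_le hε.le ENNReal.toReal_nonneg
    (ENNReal.toReal_le_of_le_ofReal (stdNormalCDF_nonneg α) hBα)
    (ENNReal.toReal_le_of_le_ofReal
      (sub_nonneg.2 (stdNormalCDF_strictMono.monotone hst)) hBst)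
  calc ENNReal.ofReal (Φ (α + ε)) * γ B = ENNReal.ofReal ((γ B).toReal * Φ (α + ε)) := by
        rw [ENNReal.ofReal_mul ENNReal.toReal_nonneg, ENNReal.ofReal_toReal (measure_ne_top _ _),
          mul_comm]
    _ ≤ ENNReal.ofReal (Φ α * (Φ (t + ε) - Φ (s - ε))) := ENNReal.ofReal_le_ofReal hbound
    _ = ENNReal.ofReal (Φ α) * γ (Ioo (s - ε) (t + ε)) := by
        rw [gaussianReal_Ioo (by linarith), ENNReal.ofReal_mul (stdNormalCDF_nonneg α)]
    _ ≤ ENNReal.ofReal (Φ α) * γ C := by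
        gcongr
        exact Ioo_sub_csInf_add_csSup_subset hC hε hBC hB

lemma ofReal_mul_gaussianReal_le (hC : C.OrdConnected) (hε : 0 < ε)
    (hBC : ∀ b ∈ B, Ioo (b - ε) (b + ε) ⊆ C) (hBα : γ B ≤ ENNReal.ofReal (Φ α)) :
    ENNReal.ofReal (Φ (α + ε)) * γ B ≤ ENNReal.ofReal (Φ α) * γ C := by
  have hmono : Monotone fun n : ℕ => B ∩ Icc (-n : ℝ) n := fun m n hmn =>
    inter_subset_inter_right _ (Icc_subset_Icc (by simpa using hmn) (by simpa using hmn))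
  have hunion : ⋃ n : ℕ, B ∩ Icc (-n : ℝ) n = B := by
    refine (iUnion_subset fun n => inter_subset_left).antisymm fun b hb => ?_
    obtain ⟨n, hn⟩ := exists_nat_ge |b|
    exact mem_iUnion.2 ⟨n, hb, abs_le.1 hn⟩
  rw [← hunion, hmono.measure_iUnion, ENNReal.mul_iSup]
  exact iSup_le fun n => ofReal_mul_gaussianReal_le_of_bddBelow_of_bddAbove hC hε
    (fun b hb => hBC b hb.1) ((measure_mono inter_subset_left).trans hBα)
    bddBelow_Icc.inter_of_right bddAbove_Icc.inter_of_right

end OrdConnected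

lemma mul_measure_le_of_forall_connectedComponentIn {X : Type*} [TopologicalSpace X]
    [LocallyConnectedSpace X] [TopologicalSpace.SeparableSpace X] [MeasurableSpace X]
    [OpensMeasurableSpace X]
    (μ : Measure X) {U A : Set X} (hU : IsOpen U) (hAU : A ⊆ U) {c d : ENNReal}
    (h : ∀ x ∈ U, c * μ (A ∩ connectedComponentIn U x) ≤ d * μ (connectedComponentIn U x)) :
    c * μ A ≤ d * μ U := by
  set T := connectedComponentIn U '' U
  have hopen : ∀ C ∈ T, IsOpen C := by
    rintro _ ⟨x, -, rfl⟩
    exact hU.connectedComponentIn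
  have hdisj : T.PairwiseDisjoint id := by
    rintro _ ⟨x, -, rfl⟩ _ ⟨y, -, rfl⟩ hxy
    refine disjoint_left.2 fun z hzx hzy => hxy ?_
    rw [connectedComponentIn_eq hzx, connectedComponentIn_eq hzy]
  have hT : T.Countable := hdisj.countable_of_isOpen hopen fun _ ⟨x, hx, hC⟩ =>
    hC ▸ ⟨x, mem_connectedComponentIn hx⟩
  have hcover : A ⊆ ⋃ C ∈ T, A ∩ C := fun a ha =>
    mem_iUnion₂.2 ⟨_, mem_image_of_mem _ (hAU ha), ha, mem_connectedComponentIn (hAU ha)⟩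
  calc c * μ A ≤ c * ∑' C : T, μ (A ∩ C) := by
        gcongr
        exact (measure_mono hcover).trans (measure_biUnion_le μ hT _)
    _ = ∑' C : T, c * μ (A ∩ C) := ENNReal.tsum_mul_left.symm
    _ ≤ ∑' C : T, d * μ C := by
        refine ENNReal.tsum_le_tsum ?_
        rintro ⟨_, x, hx, rfl⟩
        exact h x hx
    _ = d * μ (⋃₀ T) := by
        rw [ENNReal.tsum_mul_left, measure_sUnion hT hdisj fun C hC => (hopen C hC).measurableSet]
    _ ≤ d * μ U := by
        gcongr
        exact sUnion_subset fun _ ⟨x, _, hC⟩ => hC ▸ connectedComponentIn_subset U x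

theorem one_dim_gaussian_isoperimetric_general (A : Set ℝ)
    (α : ℝ) (hα : ((gaussianReal 0 1) A).toReal = stdNormalCDF α)
    (ε : ℝ) (hε : 0 ≤ ε) :
    ENNReal.ofReal (stdNormalCDF (α + ε)) ≤
      gaussianReal 0 1 {x : ℝ | ∃ a ∈ A, |x - a| ≤ ε} := by
  have hγA : γ A = ENNReal.ofReal (Φ α) := hα ▸ (ENNReal.ofReal_toReal (measure_ne_top _ _)).symm
  rcases hε.eq_or_lt with rfl | hε
  · rw [add_zero, ← hγA]
    exact measure_mono fun a ha => ⟨a, ha, by simp⟩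
  set U := ⋃ a ∈ A, Ioo (a - ε) (a + ε)
  have hAU : A ⊆ U := fun a ha => mem_iUnion₂.2 ⟨a, ha, by constructor <;> linarith⟩
  have hUA : U ⊆ {x | ∃ a ∈ A, |x - a| ≤ ε} := by
    simp only [U, iUnion_subset_iff]
    exact fun a ha x hx => ⟨a, ha, abs_sub_le_iff.2 ⟨by linarith [hx.2], by linarith [hx.1]⟩⟩
  have hcomponent (x : ℝ) : ∀ b ∈ A ∩ connectedComponentIn U x,
      Ioo (b - ε) (b + ε) ⊆ connectedComponentIn U x := fun b ⟨hbA, hbx⟩ =>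
    connectedComponentIn_eq hbx ▸ isPreconnected_Ioo.subset_connectedComponentIn
      ⟨by linarith, by linarith⟩ (subset_biUnion_of_mem (u := fun a => Ioo (a - ε) (a + ε)) hbA)
  have hsum := mul_measure_le_of_forall_connectedComponentIn γ
    (isOpen_biUnion fun _ _ => isOpen_Ioo) hAU fun x _ =>
      ofReal_mul_gaussianReal_le isPreconnected_connectedComponentIn.ordConnected hε
        (hcomponent x) ((measure_mono inter_subset_left).trans hγA.le)
  rw [hγA, mul_comm] at hsum
  exact ((ENNReal.mul_le_mul_iff_right (by simpa using stdNormalCDF_pos α)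
    ENNReal.ofReal_ne_top).1 hsum).trans (measure_mono hUA)

theorem one_dim_gaussian_isoperimetric (A : Set ℝ) (hA : MeasurableSet A)
    (α : ℝ) (hα : ((gaussianReal 0 1) A).toReal = stdNormalCDF α)
    (ε : ℝ) (hε : 0 ≤ ε) :
    ENNReal.ofReal (stdNormalCDF (α + ε)) ≤
      gaussianReal 0 1 {x : ℝ | ∃ a ∈ A, |x - a| ≤ ε} :=
  one_dim_gaussian_isoperimetric_general A α hα ε hε
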